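/- Let m₁,…,m_r be positive integers (r ≥ 2). The affine variety in ℂ^r defined by the system x₁^{m₁}+x₂^{m₂} = 0, x₂^{m₂}+x₃^{m₃} = 0, …, x_{r-1}^{m_{r-1}}+x_r^{m_r} = 0 has exactly m₁m₂⋯m_r / lcm(m₁,…,m_r) irreducible components. -/

import Mathlib

/-!
Put `L = lcm(m)` and `c i = L / m i`. Every point `ζ` with `ζ i ^ m i = (-1) ^ i` determines a
monomial curve `t ↦ (ζ i * t ^ c i)` lying on the variety, and the kernel of this
parametrization is a prime ideal. Conversely, any prime `p` containing the binomials contains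
one of these curve ideals: map into an algebraically closed field, choose `τ` with
`τ ^ L = x₀ ^ m₀`; then each `xᵢ / τ ^ cᵢ` solves `z ^ mᵢ = (-1) ^ i`, so it comes from `ℂ`.
Hence the minimal primes are exactly the curve ideals. An inclusion of curve ideals forces
`∏ ζ'^a / ζ^a = ∏ ζ'^b / ζ^b` whenever `∑ aᵢ cᵢ = ∑ bᵢ cᵢ`, and since `gcd(cᵢ) = 1` this
makes `ζ' = (t ^ cᵢ * ζᵢ)ᵢ` for some `t` with `t ^ L = 1`. So the `∏ mᵢ` such points fall
into classes of exactly `L` points, one class per component.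
-/

open Finset

universe u

theorem exists_zpow_eq_of_prod_zpow_eq_one {G ι : Type*} [CommGroup G] [Fintype ι]
    {c n : ι → ℤ} (hn : ∑ i, n i * c i = 1) {ρ : ι → G}
    (hρ : ∀ ν : ι → ℤ, ∑ i, ν i * c i = 0 → ∏ i, ρ i ^ ν i = 1) :
    ∃ g : G, ∀ i, ρ i = g ^ c i := by
  classical
  refine ⟨∏ j, ρ j ^ n j, fun i => ?_⟩
  have hν := hρ (Pi.single i 1 - c i • n) (by
    simp only [Pi.sub_apply, Pi.smul_apply, smul_eq_mul, sub_mul, sum_sub_distrib, mul_assoc,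
      ← mul_sum, hn, Pi.single_apply, ite_mul, one_mul, zero_mul, sum_ite_eq', mem_univ, if_true,
      mul_one, sub_self])
  have hsingle : ∏ j, ρ j ^ (Pi.single i 1 : ι → ℤ) j = ρ i := by
    rw [prod_eq_single i (fun j _ hj => by rw [Pi.single_eq_of_ne hj, zpow_zero])
      (fun h => absurd (mem_univ i) h), Pi.single_eq_same, zpow_one]
  calc ρ i = ∏ j, ρ j ^ (Pi.single i 1 : ι → ℤ) j := hsingle.symm
    _ = ∏ j, ρ j ^ (c i * n j) := by
        rw [← div_eq_one, ← prod_div_distrib, ← hν]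
        refine prod_congr rfl fun j _ => ?_
        rw [Pi.sub_apply, Pi.smul_apply, smul_eq_mul, zpow_sub, div_eq_mul_inv]
    _ = (∏ j, ρ j ^ n j) ^ c i := by
        rw [← prod_zpow]
        exact prod_congr rfl fun j _ => by rw [← zpow_mul, mul_comm]

theorem prod_zpow_eq_one_of_prod_pow_eq {G ι : Type*} [CommGroup G] [Fintype ι] {c : ι → ℕ}
    {ρ : ι → G}
    (hρ : ∀ a b : ι → ℕ, ∑ i, a i * c i = ∑ i, b i * c i → ∏ i, ρ i ^ a i = ∏ i, ρ i ^ b i)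
    (ν : ι → ℤ) (hν : ∑ i, ν i * c i = 0) : ∏ i, ρ i ^ ν i = 1 := by
  have hsplit : ∀ i, ν i = ((ν i).toNat : ℤ) - ((-ν i).toNat : ℤ) := fun i =>
    (Int.toNat_sub_toNat_neg (ν i)).symm
  have hsum : ∑ i, (ν i).toNat * c i = ∑ i, (-ν i).toNat * c i := by
    zify
    rw [← sub_eq_zero, ← sum_sub_distrib, ← hν]
    exact sum_congr rfl fun i _ => by rw [← sub_mul, ← hsplit]
  calc ∏ i, ρ i ^ ν i = (∏ i, ρ i ^ (ν i).toNat) / ∏ i, ρ i ^ (-ν i).toNat := by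
        rw [← prod_div_distrib]
        exact prod_congr rfl fun i _ => by
          rw [div_eq_mul_inv, ← zpow_natCast, ← zpow_natCast, ← zpow_sub, ← hsplit]
    _ = 1 := by rw [hρ _ _ hsum, div_self']

theorem Finset.lcm_pos {ι : Type*} {s : Finset ι} {f : ι → ℕ} (hf : ∀ i ∈ s, 0 < f i) :
    0 < s.lcm f :=
  Nat.pos_of_ne_zero (lcm_ne_zero_iff.mpr fun i hi => (hf i hi).ne')

theorem Nat.eq_one_of_forall_dvd_lcm_div {ι : Type*} [Fintype ι] [Nonempty ι] {m : ι → ℕ}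
    (hm : ∀ i, 0 < m i) {d : ℕ} (hd : ∀ i, d ∣ univ.lcm m / m i) : d = 1 := by
  have hmL : ∀ i, m i ∣ univ.lcm m := fun i => dvd_lcm (mem_univ i)
  have hL : 0 < univ.lcm m := Finset.lcm_pos fun i _ => hm i
  have hdL : d ∣ univ.lcm m := (hd (Classical.arbitrary ι)).trans (Nat.div_dvd_of_dvd (hmL _))
  have hLd : univ.lcm m ∣ univ.lcm m / d := Finset.lcm_dvd fun i _ => by
    obtain ⟨k, hk⟩ := hd i
    refine ⟨k, Nat.div_eq_of_eq_mul_left (Nat.pos_of_dvd_of_pos hdL hL) ?_⟩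
    rw [← Nat.mul_div_cancel' (hmL i), hk]
    ring
  obtain ⟨t, ht⟩ := hLd
  refine Nat.eq_one_of_mul_eq_one_right (n := t) (Nat.eq_of_mul_eq_mul_left hL ?_)
  calc univ.lcm m * (d * t) = d * (univ.lcm m * t) := by ring
    _ = univ.lcm m * 1 := by rw [← ht, Nat.mul_div_cancel' hdL, mul_one]

theorem exists_sum_mul_lcm_div_eq_one {ι : Type*} [Fintype ι] [Nonempty ι] {m : ι → ℕ}
    (hm : ∀ i, 0 < m i) : ∃ n : ι → ℤ, ∑ i, n i * ((univ.lcm m / m i : ℕ) : ℤ) = 1 := by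
  obtain ⟨n, hn⟩ := univ.gcd_eq_sum_mul fun i => ((univ.lcm m / m i : ℕ) : ℤ)
  have hgcd : (univ.gcd fun i => ((univ.lcm m / m i : ℕ) : ℤ)).natAbs = 1 :=
    Nat.eq_one_of_forall_dvd_lcm_div hm fun i =>
      Int.natAbs_dvd_natAbs.mpr (gcd_dvd (mem_univ i))
  rcases Int.natAbs_eq_iff.mp hgcd with h | h
  · exact ⟨n, by simp only [mul_comm (n _), ← hn, h, Nat.cast_one]⟩
  · exact ⟨-n, by simp only [Pi.neg_apply, neg_mul, sum_neg_distrib, mul_comm (n _), ← hn, h,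
      Nat.cast_one, neg_neg]⟩

open Polynomial in
theorem exists_pow_eq_and_map_mul_pow_eq {K F : Type*} [Field K] [IsAlgClosed K] [Field F]
    (f : K →+* F) {m c : ℕ} (hm : 0 < m) (hc : 0 < c) {s : K} {u τ : F}
    (h : u ^ m = f s * τ ^ (m * c)) : ∃ z : K, z ^ m = s ∧ f z * τ ^ c = u := by
  rcases eq_or_ne τ 0 with rfl | hτ
  · obtain ⟨z, hz⟩ := IsAlgClosed.exists_pow_nat_eq s hm
    rw [zero_pow (Nat.mul_pos hm hc).ne', mul_zero, pow_eq_zero_iff hm.ne'] at h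
    exact ⟨z, hz, by rw [h, zero_pow hc.ne', mul_zero]⟩
  · have hτc : τ ^ c ≠ 0 := pow_ne_zero _ hτ
    have hpow : (u / τ ^ c) ^ m = f s := by
      rw [div_pow, h, ← pow_mul, mul_comm c, mul_div_cancel_right₀ _ (pow_ne_zero _ hτ)]
    have hroot : ((X ^ m - C s).map f).IsRoot (u / τ ^ c) := by
      rw [IsRoot, Polynomial.map_sub, Polynomial.map_pow, map_X, map_C, eval_sub, eval_pow,
        eval_X, eval_C, hpow, sub_self]
    obtain ⟨z, hz⟩ := (IsAlgClosed.splits (X ^ m - C s)).mem_range_of_isRoot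
      (X_pow_sub_C_ne_zero hm s) hroot
    exact ⟨z, f.injective (by rw [map_pow, hz, hpow]), by rw [hz, div_mul_cancel₀ _ hτc]⟩

open Polynomial in
theorem Complex.card_pow_eq {n : ℕ} (hn : 0 < n) {a : ℂ} (ha : a ≠ 0) :
    Nat.card {z : ℂ // z ^ n = a} = n := by
  classical
  have hprim := Complex.isPrimitiveRoot_exp n hn.ne'
  calc Nat.card {z : ℂ // z ^ n = a} = #(nthRootsFinset n a) :=
        (Nat.card_congr (Equiv.subtypeEquivRight fun z => (mem_nthRootsFinset hn a).symm)).trans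
          (Nat.card_eq_finsetCard _)
    _ = n := by
        rw [nthRootsFinset_def, Multiset.toFinset_card_of_nodup (hprim.nthRoots_nodup ha),
          hprim.card_nthRoots, if_pos (IsAlgClosed.exists_pow_nat_eq a hn)]

theorem Nat.card_eq_card_mul_of_card_fiber {α β : Type*} [Finite α] {f : α → β}
    (hf : Function.Surjective f) {n : ℕ} (h : ∀ a, Nat.card {a' // f a' = f a} = n) :
    Nat.card α = Nat.card β * n := by
  have := Finite.of_surjective f hf
  have := Fintype.ofFinite β
  rw [← Nat.card_congr (Equiv.sigmaFiberEquiv f), Nat.card_sigma]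
  calc ∑ b, Nat.card {a // f a = b} = ∑ _ : β, n := sum_congr rfl fun b _ => by
        obtain ⟨a, rfl⟩ := hf b
        exact h a
    _ = Nat.card β * n := by
        rw [sum_const, Finset.card_univ, smul_eq_mul, Nat.card_eq_fintype_card]

theorem Ideal.IsPrime.exists_isAlgClosed_ker_eq {R : Type u} [CommRing R] {p : Ideal R}
    (hp : p.IsPrime) :
    ∃ (F : Type u) (_ : Field F) (_ : IsAlgClosed F) (φ : R →+* F), RingHom.ker φ = p := by
  refine ⟨AlgebraicClosure (FractionRing (R ⧸ p)), inferInstance, inferInstance,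
    (algebraMap (FractionRing (R ⧸ p)) _).comp
      ((algebraMap (R ⧸ p) (FractionRing (R ⧸ p))).comp (Ideal.Quotient.mk p)), ?_⟩
  rw [RingHom.ker_comp_of_injective _ (RingHom.injective _),
    RingHom.ker_comp_of_injective _ (IsFractionRing.injective _ _), Ideal.mk_ker]

noncomputable section MonomialCurve

variable {K ι : Type*} [Field K] (c : ι → ℕ) (ζ : ι → K)

def monomialCurve : MvPolynomial ι K →ₐ[K] Polynomial K :=
  MvPolynomial.aeval fun i => Polynomial.C (ζ i) * Polynomial.X ^ c i

def monomialCurveIdeal : Ideal (MvPolynomial ι K) := RingHom.ker (monomialCurve c ζ)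

theorem monomialCurve_X (i : ι) :
    monomialCurve c ζ (MvPolynomial.X i) = Polynomial.C (ζ i) * Polynomial.X ^ c i :=
  MvPolynomial.aeval_X _ i

theorem monomialCurve_C (a : K) : monomialCurve c ζ (MvPolynomial.C a) = Polynomial.C a :=
  MvPolynomial.aeval_C _ a

theorem monomialCurve_prod_X_pow [Fintype ι] (a : ι → ℕ) :
    monomialCurve c ζ (∏ i, MvPolynomial.X i ^ a i)
      = Polynomial.C (∏ i, ζ i ^ a i) * Polynomial.X ^ ∑ i, a i * c i := by
  simp only [map_prod, map_pow, monomialCurve_X, mul_pow, prod_mul_distrib, ← pow_mul,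
    prod_pow_eq_pow_sum, mul_comm (c _)]

instance monomialCurveIdeal_isPrime : (monomialCurveIdeal c ζ).IsPrime := RingHom.ker_isPrime _

theorem monomialCurveIdeal_le_ker {R F : Type*} [CommRing R] [FunLike F (MvPolynomial ι K) R]
    [RingHomClass F (MvPolynomial ι K) R] (φ : F) (τ : R)
    (h : ∀ i, φ (MvPolynomial.X i) = φ (MvPolynomial.C (ζ i)) * τ ^ c i) :
    monomialCurveIdeal c ζ ≤ RingHom.ker φ := by
  have hφ : (φ : MvPolynomial ι K →+* R) = (Polynomial.eval₂RingHom
      ((φ : MvPolynomial ι K →+* R).comp MvPolynomial.C) τ).comp (monomialCurve c ζ) :=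
    MvPolynomial.ringHom_ext (fun a => by simp)
      (fun i => by simp [monomialCurve_X, h])
  intro f hf
  rw [RingHom.mem_ker, ← RingHom.coe_coe, hφ, RingHom.comp_apply, RingHom.coe_coe,
    RingHom.mem_ker.mp hf, map_zero]

theorem monomialCurveIdeal_le_pow_mul (t : K) :
    monomialCurveIdeal c ζ ≤ monomialCurveIdeal c (fun i => t ^ c i * ζ i) :=
  monomialCurveIdeal_le_ker c ζ (monomialCurve c fun i => t ^ c i * ζ i)
    (Polynomial.C t * Polynomial.X) fun i => by
    simp only [monomialCurve_X, monomialCurve_C, mul_pow, Polynomial.C_mul, Polynomial.C_pow]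
    ring

theorem monomialCurveIdeal_pow_mul {t : K} (ht : t ≠ 0) :
    monomialCurveIdeal c (fun i => t ^ c i * ζ i) = monomialCurveIdeal c ζ := by
  refine le_antisymm ?_ (monomialCurveIdeal_le_pow_mul c ζ t)
  convert monomialCurveIdeal_le_pow_mul c (fun i => t ^ c i * ζ i) t⁻¹
  rw [← mul_assoc, ← mul_pow, inv_mul_cancel₀ ht, one_pow, one_mul]

variable {c ζ}

theorem prod_pow_mul_prod_pow_eq_of_monomialCurveIdeal_le [Fintype ι] {ζ' : ι → K}
    (h : monomialCurveIdeal c ζ ≤ monomialCurveIdeal c ζ') {a b : ι → ℕ}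
    (hab : ∑ i, a i * c i = ∑ i, b i * c i) :
    (∏ i, ζ i ^ b i) * ∏ i, ζ' i ^ a i = (∏ i, ζ i ^ a i) * ∏ i, ζ' i ^ b i := by
  set f : MvPolynomial ι K :=
    MvPolynomial.C (∏ i, ζ i ^ b i) * ∏ i, MvPolynomial.X i ^ a i
      - MvPolynomial.C (∏ i, ζ i ^ a i) * ∏ i, MvPolynomial.X i ^ b i
  have hf : ∀ ξ : ι → K, monomialCurve c ξ f = Polynomial.C
      ((∏ i, ζ i ^ b i) * (∏ i, ξ i ^ a i) - (∏ i, ζ i ^ a i) * ∏ i, ξ i ^ b i)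
        * Polynomial.X ^ ∑ i, a i * c i := fun ξ => by
    simp only [f, map_sub, map_mul, monomialCurve_C, monomialCurve_prod_X_pow, ← hab]
    ring
  have hfζ' : monomialCurve c ζ' f = 0 := h (by
    rw [monomialCurveIdeal, RingHom.mem_ker, hf, mul_comm (∏ i, ζ i ^ b i), sub_self,
      Polynomial.C_0, zero_mul])
  rw [hf, mul_eq_zero, Polynomial.C_eq_zero, sub_eq_zero] at hfζ'
  exact hfζ'.resolve_right (pow_ne_zero _ Polynomial.X_ne_zero)

theorem exists_eq_pow_mul_of_monomialCurveIdeal_le [Fintype ι] {ζ' : ι → K} {n : ι → ℤ}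
    (hn : ∑ i, n i * c i = 1) (hζ : ∀ i, ζ i ≠ 0) (hζ' : ∀ i, ζ' i ≠ 0)
    (h : monomialCurveIdeal c ζ ≤ monomialCurveIdeal c ζ') :
    ∃ t : Kˣ, ∀ i, ζ' i = (t : K) ^ c i * ζ i := by
  set ρ : ι → Kˣ := fun i => Units.mk0 (ζ' i / ζ i) (div_ne_zero (hζ' i) (hζ i))
  have hρ : ∀ a : ι → ℕ, ((∏ i, ρ i ^ a i : Kˣ) : K) = (∏ i, ζ' i ^ a i) / ∏ i, ζ i ^ a i := by
    intro a
    simp only [Units.coe_prod, Units.val_pow_eq_pow_val, Units.val_mk0, div_pow,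
      prod_div_distrib, ρ]
  have hprod : ∀ a b : ι → ℕ, ∑ i, a i * c i = ∑ i, b i * c i →
      ∏ i, ρ i ^ a i = ∏ i, ρ i ^ b i := fun a b hab => by
    have hne : ∀ a : ι → ℕ, ∏ i, ζ i ^ a i ≠ 0 := fun a =>
      prod_ne_zero_iff.mpr fun i _ => pow_ne_zero _ (hζ i)
    rw [Units.ext_iff, hρ, hρ, div_eq_div_iff (hne a) (hne b), mul_comm,
      mul_comm (∏ i, ζ' i ^ b i)]
    exact prod_pow_mul_prod_pow_eq_of_monomialCurveIdeal_le h hab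
  obtain ⟨t, ht⟩ := exists_zpow_eq_of_prod_zpow_eq_one hn
    (prod_zpow_eq_one_of_prod_pow_eq hprod)
  refine ⟨t, fun i => ?_⟩
  have := congrArg Units.val (ht i)
  rwa [zpow_natCast, Units.val_pow_eq_pow_val, Units.val_mk0, div_eq_iff (hζ i)] at this

end MonomialCurve

noncomputable section ChainedBinomials

variable (K : Type*) [Field K] {r : ℕ} (m : Fin r → ℕ)

def chainedBinomials : Set (MvPolynomial (Fin r) K) :=
  {p | ∃ (i : ℕ) (h : i + 1 < r),
    p = MvPolynomial.X (⟨i, Nat.lt_of_succ_lt h⟩ : Fin r) ^ m ⟨i, Nat.lt_of_succ_lt h⟩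
      + MvPolynomial.X (⟨i + 1, h⟩ : Fin r) ^ m ⟨i + 1, h⟩}

def chainWeight (i : Fin r) : ℕ := univ.lcm m / m i

def normalizedChainPoints : Set (Fin r → K) := {ζ | ∀ i, ζ i ^ m i = (-1) ^ (i : ℕ)}

variable {K m}

theorem mul_chainWeight (i : Fin r) : m i * chainWeight m i = univ.lcm m :=
  Nat.mul_div_cancel' (dvd_lcm (mem_univ i))

theorem chainWeight_pos (hm : ∀ i, 0 < m i) (i : Fin r) : 0 < chainWeight m i :=
  Nat.pos_of_ne_zero fun h => (Finset.lcm_pos fun i _ => hm i).ne' (by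
    rw [← mul_chainWeight i, h, mul_zero])

theorem X_pow_sub_mem_span_chainedBinomials (hr : 0 < r) (i : Fin r) :
    MvPolynomial.X i ^ m i - (-1) ^ (i : ℕ) * MvPolynomial.X ⟨0, hr⟩ ^ m ⟨0, hr⟩
      ∈ Ideal.span (chainedBinomials K m) := by
  obtain ⟨i, hi⟩ := i
  induction i with
  | zero => simp
  | succ i ih =>
    have hgen : MvPolynomial.X (⟨i, Nat.lt_of_succ_lt hi⟩ : Fin r) ^ m ⟨i, Nat.lt_of_succ_lt hi⟩
        + MvPolynomial.X (⟨i + 1, hi⟩ : Fin r) ^ m ⟨i + 1, hi⟩ ∈ chainedBinomials K m :=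
      ⟨i, hi, rfl⟩
    convert Ideal.sub_mem _ (Ideal.subset_span hgen) (ih (Nat.lt_of_succ_lt hi)) using 1
    ring

theorem ne_zero_of_mem_normalizedChainPoints (hm : ∀ i, 0 < m i) {ζ : Fin r → K}
    (hζ : ζ ∈ normalizedChainPoints K m) (i : Fin r) : ζ i ≠ 0 := fun h => by
  have := hζ i
  rw [h, zero_pow (hm i).ne'] at this
  exact pow_ne_zero _ (neg_ne_zero.mpr one_ne_zero) this.symm

theorem span_chainedBinomials_le_monomialCurveIdeal {ζ : Fin r → K}
    (hζ : ζ ∈ normalizedChainPoints K m) :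
    Ideal.span (chainedBinomials K m) ≤ monomialCurveIdeal (chainWeight m) ζ := by
  have hX : ∀ i, monomialCurve (chainWeight m) ζ (MvPolynomial.X i ^ m i)
      = Polynomial.C ((-1) ^ (i : ℕ)) * Polynomial.X ^ univ.lcm m := fun i => by
    rw [map_pow, monomialCurve_X, mul_pow, ← Polynomial.C_pow, hζ i, ← pow_mul,
      mul_comm (chainWeight m i), mul_chainWeight, mul_comm]
  rw [Ideal.span_le]
  rintro _ ⟨i, hi, rfl⟩
  rw [SetLike.mem_coe, monomialCurveIdeal, RingHom.mem_ker, map_add, hX, hX, ← add_mul,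
    ← Polynomial.C_add, pow_succ, mul_neg_one, add_neg_cancel, Polynomial.C_0, zero_mul]

theorem exists_mem_normalizedChainPoints_monomialCurveIdeal_le_ker [IsAlgClosed K]
    (hr : 0 < r) (hm : ∀ i, 0 < m i) {F : Type*} [Field F] [IsAlgClosed F]
    (φ : MvPolynomial (Fin r) K →+* F) (h : Ideal.span (chainedBinomials K m) ≤ RingHom.ker φ) :
    ∃ ζ ∈ normalizedChainPoints K m, monomialCurveIdeal (chainWeight m) ζ ≤ RingHom.ker φ := by
  have hL : 0 < univ.lcm m := Finset.lcm_pos fun i _ => hm i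
  obtain ⟨τ, hτ⟩ := IsAlgClosed.exists_pow_nat_eq (φ (MvPolynomial.X ⟨0, hr⟩) ^ m ⟨0, hr⟩) hL
  have hrel : ∀ i, φ (MvPolynomial.X i) ^ m i
      = φ.comp MvPolynomial.C ((-1) ^ (i : ℕ)) * τ ^ (m i * chainWeight m i) := fun i => by
    have := RingHom.mem_ker.mp (h (X_pow_sub_mem_span_chainedBinomials hr i))
    rw [map_sub, sub_eq_zero] at this
    simpa [mul_chainWeight, hτ] using this
  choose ζ hζ using fun i => exists_pow_eq_and_map_mul_pow_eq (φ.comp MvPolynomial.C) (hm i)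
    (chainWeight_pos hm i) (hrel i)
  exact ⟨ζ, fun i => (hζ i).1, monomialCurveIdeal_le_ker _ _ φ τ fun i => (hζ i).2.symm⟩

theorem exists_mem_rootsOfUnity_of_monomialCurveIdeal_le (hr : 0 < r) (hm : ∀ i, 0 < m i)
    {ζ ζ' : Fin r → K} (hζ : ζ ∈ normalizedChainPoints K m)
    (hζ' : ζ' ∈ normalizedChainPoints K m)
    (h : monomialCurveIdeal (chainWeight m) ζ ≤ monomialCurveIdeal (chainWeight m) ζ') :
    ∃ t ∈ rootsOfUnity (univ.lcm m) K, ∀ i, ζ' i = (t : K) ^ chainWeight m i * ζ i := by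
  have : Nonempty (Fin r) := ⟨⟨0, hr⟩⟩
  obtain ⟨n, hn⟩ := exists_sum_mul_lcm_div_eq_one hm
  obtain ⟨t, ht⟩ := exists_eq_pow_mul_of_monomialCurveIdeal_le (c := chainWeight m) hn
    (ne_zero_of_mem_normalizedChainPoints hm hζ) (ne_zero_of_mem_normalizedChainPoints hm hζ') h
  refine ⟨t, (mem_rootsOfUnity' _ _).mpr ?_, ht⟩
  have h0 := hζ' ⟨0, hr⟩
  rw [ht, mul_pow, hζ ⟨0, hr⟩, ← pow_mul, mul_comm (chainWeight m _), mul_chainWeight] at h0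
  simpa using h0

theorem monomialCurveIdeal_eq_of_le (hr : 0 < r) (hm : ∀ i, 0 < m i)
    {ζ ζ' : Fin r → K} (hζ : ζ ∈ normalizedChainPoints K m)
    (hζ' : ζ' ∈ normalizedChainPoints K m)
    (h : monomialCurveIdeal (chainWeight m) ζ ≤ monomialCurveIdeal (chainWeight m) ζ') :
    monomialCurveIdeal (chainWeight m) ζ = monomialCurveIdeal (chainWeight m) ζ' := by
  obtain ⟨t, -, hζ'_eq⟩ := exists_mem_rootsOfUnity_of_monomialCurveIdeal_le hr hm hζ hζ' h
  rw [funext hζ'_eq, monomialCurveIdeal_pow_mul _ _ t.ne_zero]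

theorem minimalPrimes_span_chainedBinomials [IsAlgClosed K] (hr : 0 < r) (hm : ∀ i, 0 < m i) :
    (Ideal.span (chainedBinomials K m)).minimalPrimes
      = monomialCurveIdeal (chainWeight m) '' normalizedChainPoints K m := by
  have hcover : ∀ p : Ideal (MvPolynomial (Fin r) K), p.IsPrime →
      Ideal.span (chainedBinomials K m) ≤ p →
      ∃ ζ ∈ normalizedChainPoints K m, monomialCurveIdeal (chainWeight m) ζ ≤ p := by
    intro p hp hle
    obtain ⟨F, _, _, φ, rfl⟩ := hp.exists_isAlgClosed_ker_eq
    exact exists_mem_normalizedChainPoints_monomialCurveIdeal_le_ker hr hm φ hle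
  ext p
  constructor
  · rintro ⟨⟨hp, hle⟩, hmin⟩
    obtain ⟨ζ, hζ, hζp⟩ := hcover p hp hle
    exact ⟨ζ, hζ, le_antisymm hζp
      (hmin ⟨inferInstance, span_chainedBinomials_le_monomialCurveIdeal hζ⟩ hζp)⟩
  · rintro ⟨ζ, hζ, rfl⟩
    refine ⟨⟨inferInstance, span_chainedBinomials_le_monomialCurveIdeal hζ⟩,
      fun q ⟨hq, hle⟩ hqζ => ?_⟩
    obtain ⟨ζ', hζ', hζ'q⟩ := hcover q hq hle
    rwa [monomialCurveIdeal_eq_of_le hr hm hζ' hζ (hζ'q.trans hqζ)] at hζ'q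

theorem card_fiber_monomialCurveIdeal (hr : 0 < r) (hm : ∀ i, 0 < m i)
    (ζ₀ : normalizedChainPoints K m) :
    Nat.card {ζ : normalizedChainPoints K m // monomialCurveIdeal (chainWeight m) (ζ : Fin r → K)
      = monomialCurveIdeal (chainWeight m) (ζ₀ : Fin r → K)}
      = Nat.card (rootsOfUnity (univ.lcm m) K) := by
  have : Nonempty (Fin r) := ⟨⟨0, hr⟩⟩
  have hζ₀ := ne_zero_of_mem_normalizedChainPoints hm ζ₀.2
  let scale (t : rootsOfUnity (univ.lcm m) K) : {ζ : normalizedChainPoints K m //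
      monomialCurveIdeal (chainWeight m) (ζ : Fin r → K)
        = monomialCurveIdeal (chainWeight m) (ζ₀ : Fin r → K)} :=
    ⟨⟨fun i => ((t : Kˣ) : K) ^ chainWeight m i * ζ₀.1 i, fun i => by
      rw [mul_pow, ← pow_mul, mul_comm (chainWeight m i), mul_chainWeight, ζ₀.2 i,
        (mem_rootsOfUnity' _ _).mp t.2, one_mul]⟩,
      monomialCurveIdeal_pow_mul _ _ (t : Kˣ).ne_zero⟩
  refine (Nat.card_congr (Equiv.ofBijective scale ⟨fun s t hst => ?_, fun ζ => ?_⟩)).symm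
  · have hpow : ∀ i, ((s : Kˣ) : K) ^ chainWeight m i = ((t : Kˣ) : K) ^ chainWeight m i :=
      fun i => mul_right_cancel₀ (hζ₀ i)
        (congrFun (congrArg Subtype.val (congrArg Subtype.val hst)) i)
    have hord : orderOf (((s : Kˣ) : K) / ((t : Kˣ) : K)) = 1 :=
      Nat.eq_one_of_forall_dvd_lcm_div hm fun i =>
        orderOf_dvd_of_pow_eq_one (n := chainWeight m i) (by
          rw [div_pow, hpow i, div_self (pow_ne_zero _ (t : Kˣ).ne_zero)])
    rw [orderOf_eq_one_iff, div_eq_one_iff_eq (t : Kˣ).ne_zero] at hord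
    exact Subtype.ext (Units.ext hord)
  · obtain ⟨t, ht, hζ⟩ :=
      exists_mem_rootsOfUnity_of_monomialCurveIdeal_le hr hm ζ₀.2 ζ.1.2 ζ.2.ge
    exact ⟨⟨t, ht⟩, Subtype.ext (Subtype.ext (funext fun i => (hζ i).symm))⟩

theorem card_normalizedChainPoints (hm : ∀ i, 0 < m i) :
    Nat.card (normalizedChainPoints ℂ m) = ∏ i, m i := by
  calc Nat.card (normalizedChainPoints ℂ m)
      = Nat.card (∀ i, {z : ℂ // z ^ m i = (-1) ^ (i : ℕ)}) :=
        Nat.card_congr (Equiv.subtypePiEquivPi (p := fun i (z : ℂ) => z ^ m i = (-1) ^ (i : ℕ)))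
    _ = ∏ i, m i := by
        rw [Nat.card_pi]
        exact prod_congr rfl fun i _ =>
          Complex.card_pow_eq (hm i) (pow_ne_zero _ (neg_ne_zero.mpr one_ne_zero))

theorem card_minimalPrimes_span_chainedBinomials_mul_lcm (hr : 0 < r) (hm : ∀ i, 0 < m i) :
    Nat.card (Ideal.span (chainedBinomials ℂ m)).minimalPrimes * univ.lcm m = ∏ i, m i := by
  have : NeZero (univ.lcm m) := ⟨(Finset.lcm_pos fun i _ => hm i).ne'⟩
  have : Finite (normalizedChainPoints ℂ m) := Nat.finite_of_card_ne_zero (by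
    rw [card_normalizedChainPoints hm]
    exact prod_ne_zero_iff.mpr fun i _ => (hm i).ne')
  have hmin := minimalPrimes_span_chainedBinomials (K := ℂ) hr hm
  let toIdeal (ζ : normalizedChainPoints ℂ m) :
      (Ideal.span (chainedBinomials ℂ m)).minimalPrimes :=
    ⟨monomialCurveIdeal (chainWeight m) ζ, hmin ▸ Set.mem_image_of_mem _ ζ.2⟩
  have hsurj : Function.Surjective toIdeal := by
    rintro ⟨p, hp⟩
    rw [hmin] at hp
    obtain ⟨ζ, hζ, rfl⟩ := hp
    exact ⟨⟨ζ, hζ⟩, rfl⟩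
  rw [← card_normalizedChainPoints hm, Nat.card_eq_card_mul_of_card_fiber hsurj fun ζ => ?_]
  rw [← Complex.card_rootsOfUnity (univ.lcm m), ← card_fiber_monomialCurveIdeal hr hm ζ]
  exact Nat.card_congr (Equiv.subtypeEquivRight fun ζ' => Subtype.ext_iff)

end ChainedBinomials

/-- The affine variety in `ℂ^r` defined by the chained system
`x₁^{m₁}+x₂^{m₂} = 0, …, x_{r-1}^{m_{r-1}}+x_r^{m_r} = 0` has exactly
`m₁⋯m_r / lcm(m₁,…,m_r)` irreducible components. -/
theorem card_irreducibleComponents_chained_binomials (r : ℕ) (hr : 2 ≤ r)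
    (m : Fin r → ℕ) (hm : ∀ i, 0 < m i) :
    Nat.card ↥(irreducibleComponents
        ↥(PrimeSpectrum.zeroLocus (R := MvPolynomial (Fin r) ℂ)
          {p | ∃ (i : ℕ) (h : i + 1 < r),
            p = MvPolynomial.X (⟨i, Nat.lt_of_succ_lt h⟩ : Fin r) ^ m ⟨i, Nat.lt_of_succ_lt h⟩
              + MvPolynomial.X (⟨i + 1, h⟩ : Fin r) ^ m ⟨i + 1, h⟩}))
      * Finset.univ.lcm m = ∏ i, m i := by
  rw [← PrimeSpectrum.zeroLocus_span,
    ← card_minimalPrimes_span_chainedBinomials_mul_lcm (by omega) hm]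
  congr 1
  exact (Nat.card_congr (Ideal.minimalPrimes.equivIrreducibleComponents _).toEquiv).symm
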